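/- Let P be a path of m vertices with edges numbered 1,…,m−1 from left to right, and for 0 ≤ x ≤ y ≤ m let [x,y] denote the set of vertices lying between positions x and y (0 and m denoting the two ends of the path). Let u be an additive utility function on P and let x<y<z. Then ([x,y],[y,z]) is a PMMS partition of [x,z] for u (i.e., min{u([x,y]),u([y,z])} = PMMS([x,z])) if and only if both of the following hold: (1) u([x,y])=0, or u([x,a]) ≤ u([y,z]) where a is the largest a ≥ x with u([x,a]) < u([x,y]); and (2) u([y,z])=0, or u([b,z]) ≤ u([x,y]) where b is the smallest b ≤ z with u([b,z]) < u([y,z]). -/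
import Mathlib


namespace GraphFair

variable {V : Type*}

/-- A bundle is connected if it is empty or induces a connected subgraph of `G`. -/
def BundleConn (G : SimpleGraph V) (B : Finset V) : Prop :=
  B = ∅ ∨ (G.induce (B : Set V)).Connected

/-- A connected allocation of all the items among `n` agents: the bundles cover `V`,
are pairwise disjoint, and each bundle is connected in `G`. -/
def IsConnAlloc (G : SimpleGraph V) {n : ℕ} (A : Fin n → Finset V) : Prop :=
  (∀ v : V, ∃ i, v ∈ A i) ∧
  (∀ i j : Fin n, i ≠ j → Disjoint (A i) (A j)) ∧
  (∀ i, BundleConn G (A i))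

variable [DecidableEq V]

/-- Partitions of `X` into two bundles, each connected in the induced subgraph `G[X]`
(for `Y ⊆ X`, connectivity of `Y` in `G[X]` is the same as connectivity of `Y` in `G`). -/
def Part2 (G : SimpleGraph V) (X : Finset V) : Set (Finset V × Finset V) :=
  {p | p.1 ∪ p.2 = X ∧ Disjoint p.1 p.2 ∧ BundleConn G p.1 ∧ BundleConn G p.2}

/-- The pairwise maximin share of a bundle `X` with respect to utility `u`:
the maximum over partitions of `X` into two connected bundles of the minimum utility. -/
noncomputable def pmms (G : SimpleGraph V) (u : Finset V → ℝ) (X : Finset V) : ℝ :=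
  sSup ((fun p : Finset V × Finset V => min (u p.1) (u p.2)) '' Part2 G X)

/-- The `n`-agent maximin share of the whole vertex set: maximum over partitions of `V`
into `n` connected bundles of the minimum utility of a bundle. -/
noncomputable def mms (G : SimpleGraph V) (u : Finset V → ℝ) (n : ℕ) : ℝ :=
  sSup ((fun A : Fin n → Finset V => ⨅ i, u (A i)) '' {A | IsConnAlloc G A})

/-- Agents `i` and `j` are adjacent under allocation `A`. -/
def AdjUnder (G : SimpleGraph V) {n : ℕ} (A : Fin n → Finset V) (i j : Fin n) : Prop :=
  ∃ v ∈ A i, ∃ w ∈ A j, G.Adj v w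

/-- An allocation is `α`-PMMS if every agent with an empty bundle, and every agent with
respect to each of her neighbours, receives at least `α` times her pairwise maximin share. -/
def IsAlphaPMMS (G : SimpleGraph V) {n : ℕ} (u : Fin n → Finset V → ℝ)
    (A : Fin n → Finset V) (α : ℝ) : Prop :=
  ∀ i j : Fin n, i ≠ j → (A i = ∅ ∨ AdjUnder G A i j) →
    α * pmms G (u i) (A i ∪ A j) ≤ u i (A i)

/-- An allocation is `α`-MMS if every agent receives at least `α` times her maximin share. -/
def IsAlphaMMS (G : SimpleGraph V) {n : ℕ} (u : Fin n → Finset V → ℝ)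
    (A : Fin n → Finset V) (α : ℝ) : Prop :=
  ∀ i : Fin n, α * mms G (u i) n ≤ u i (A i)

/-- An additive (nonnegative) utility function. -/
def AdditiveUtil (u : Finset V → ℝ) : Prop :=
  (∀ X : Finset V, u X = ∑ v ∈ X, u {v}) ∧ ∀ v : V, 0 ≤ u {v}

/-- A binary additive utility function. -/
def BinaryAdditiveUtil (u : Finset V → ℝ) : Prop :=
  (∀ X : Finset V, u X = ∑ v ∈ X, u {v}) ∧ ∀ v : V, u {v} = 0 ∨ u {v} = 1

/-- A monotone (nonnegative) utility function. -/
def MonotoneUtil (u : Finset V → ℝ) : Prop :=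
  (∀ X Y : Finset V, X ⊆ Y → u X ≤ u Y) ∧ 0 ≤ u ∅

/-- An allocation is `α`-EF1. -/
def IsAlphaEF1 {n : ℕ} (u : Fin n → Finset V → ℝ) (A : Fin n → Finset V) (α : ℝ) : Prop :=
  ∀ i j : Fin n, i ≠ j → A j ≠ ∅ → ∃ v ∈ A j, α * u i ((A j).erase v) ≤ u i (A i)

/-- An allocation is EFX (envy-free up to any item). -/
def IsEFX {n : ℕ} (u : Fin n → Finset V → ℝ) (A : Fin n → Finset V) : Prop :=
  ∀ i j : Fin n, i ≠ j → A j ≠ ∅ → ∀ v ∈ A j, u i ((A j).erase v) ≤ u i (A i)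

/-- The number of agents receiving positive utility. -/
noncomputable def nashCount {n : ℕ} (u : Fin n → Finset V → ℝ) (A : Fin n → Finset V) : ℕ :=
  (Finset.univ.filter fun i : Fin n => 0 < u i (A i)).card

/-- The product of the positive utilities. -/
noncomputable def nashProd {n : ℕ} (u : Fin n → Finset V → ℝ) (A : Fin n → Finset V) : ℝ :=
  ∏ i ∈ Finset.univ.filter (fun i : Fin n => 0 < u i (A i)), u i (A i)

/-- A maximum Nash welfare (MNW) connected allocation: maximizes the number of agents with
positive utility and, subject to that, the product of the positive utilities. -/
def IsMNW (G : SimpleGraph V) {n : ℕ} (u : Fin n → Finset V → ℝ)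
    (A : Fin n → Finset V) : Prop :=
  IsConnAlloc G A ∧
  (∀ B : Fin n → Finset V, IsConnAlloc G B → nashCount u B ≤ nashCount u A) ∧
  (∀ B : Fin n → Finset V, IsConnAlloc G B →
    nashCount u B = nashCount u A → nashProd u B ≤ nashProd u A)

/-- `A'` is a Pareto-improvement of `A`. -/
def ParetoImproves {n : ℕ} (u : Fin n → Finset V → ℝ) (A' A : Fin n → Finset V) : Prop :=
  (∀ i, u i (A i) ≤ u i (A' i)) ∧ ∃ j, u j (A j) < u j (A' j)

/-- A connected allocation is Pareto-optimal if no connected allocation Pareto-improves it. -/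
def IsParetoOptimal (G : SimpleGraph V) {n : ℕ} (u : Fin n → Finset V → ℝ)
    (A : Fin n → Finset V) : Prop :=
  ∀ B : Fin n → Finset V, IsConnAlloc G B → ¬ ParetoImproves u B A

/-- The vector of agents' utilities rearranged in increasing order. -/
noncomputable def sortedUtils {n : ℕ} (u : Fin n → Finset V → ℝ)
    (A : Fin n → Finset V) : List ℝ :=
  (((Finset.univ : Finset (Fin n)).val.map fun i => u i (A i)).sort (· ≤ ·))

/-- `A'` is a leximin improvement of `A`: the sorted utility vector of `A'` is
lexicographically greater than that of `A`. -/
def LeximinImproves {n : ℕ} (u : Fin n → Finset V → ℝ) (A' A : Fin n → Finset V) : Prop :=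
  List.Lex (· < ·) (sortedUtils u A) (sortedUtils u A')

/-- A connected leximin allocation. -/
def IsLeximin (G : SimpleGraph V) {n : ℕ} (u : Fin n → Finset V → ℝ)
    (A : Fin n → Finset V) : Prop :=
  IsConnAlloc G A ∧ ∀ B : Fin n → Finset V, IsConnAlloc G B → ¬ LeximinImproves u B A

/-- `G` is a star: there is a central vertex adjacent to exactly all other vertices. -/
def IsStar (G : SimpleGraph V) : Prop :=
  ∃ c : V, ∀ a b : V, G.Adj a b ↔ a ≠ b ∧ (a = c ∨ b = c)

/-- A submodular utility function. -/
def SubmodularUtil (u : Finset V → ℝ) : Prop :=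
  ∀ X Y : Finset V, u (X ∪ Y) + u (X ∩ Y) ≤ u X + u Y

/-- A utility function with binary marginal gains (and `u ∅ = 0`). -/
def BinaryMarginalGains (u : Finset V → ℝ) : Prop :=
  u ∅ = 0 ∧ ∀ (X : Finset V) (v : V),
    u (insert v X) - u X = 0 ∨ u (insert v X) - u X = 1

/-- On the path with `m` vertices (edges numbered `1, …, m-1` from left to right),
`itv m x y` is the bundle `[x, y]` of all vertices between positions `x` and `y`. -/
def itv (m x y : ℕ) : Finset (Fin m) :=
  Finset.univ.filter fun v : Fin m => x ≤ v.val ∧ v.val < y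

end GraphFair


section PMMSAux

open GraphFair SimpleGraph

variable {m : ℕ} {u : Finset (Fin m) → ℝ}

lemma mem_itv {x y : ℕ} {v : Fin m} : v ∈ itv m x y ↔ x ≤ v.val ∧ v.val < y := by
  simp [itv]

lemma itv_empty {x y : ℕ} (h : y ≤ x) : itv m x y = ∅ := by
  ext v; simp only [mem_itv, Finset.notMem_empty, iff_false]; omega

lemma u_empty (hu : AdditiveUtil u) : u ∅ = 0 := by
  rw [hu.1]; simp

lemma u_nonneg (hu : AdditiveUtil u) (X : Finset (Fin m)) : 0 ≤ u X := by
  rw [hu.1]; exact Finset.sum_nonneg fun v _ => hu.2 v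

lemma u_mono (hu : AdditiveUtil u) {X Y : Finset (Fin m)} (h : X ⊆ Y) : u X ≤ u Y := by
  rw [hu.1, hu.1]
  exact Finset.sum_le_sum_of_subset_of_nonneg h fun v _ _ => hu.2 v

lemma itv_subset_itv {x x' y y' : ℕ} (hx : x' ≤ x) (hy : y ≤ y') :
    itv m x y ⊆ itv m x' y' := by
  intro v hv; rw [mem_itv] at *; omega

lemma itv_union {x t z : ℕ} (hx : x ≤ t) (hz : t ≤ z) :
    itv m x t ∪ itv m t z = itv m x z := by
  ext v; simp only [Finset.mem_union, mem_itv]; omega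

lemma itv_disjoint {x t z : ℕ} : Disjoint (itv m x t) (itv m t z) := by
  rw [Finset.disjoint_left]; intro v hv hv'
  rw [mem_itv] at hv hv'; omega

lemma u_itv_add (hu : AdditiveUtil u) {x t z : ℕ} (hx : x ≤ t) (hz : t ≤ z) :
    u (itv m x t) + u (itv m t z) = u (itv m x z) := by
  rw [hu.1, hu.1, hu.1, ← Finset.sum_union itv_disjoint, itv_union hx hz]

/-- Any interval bundle is connected in the path graph. -/
lemma itv_bundleConn (x y : ℕ) : BundleConn (pathGraph m) (itv m x y) := by
  rcases le_or_gt y x with h | h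
  · exact Or.inl (itv_empty h)
  rcases le_or_gt m x with h' | h'
  · left; ext v; simp only [mem_itv, Finset.notMem_empty, iff_false]
    intro ⟨h1, h2⟩; exact absurd v.isLt (by omega)
  right
  have key : ∀ (d : ℕ) (a b : ((itv m x y : Finset (Fin m)) : Set (Fin m))),
      b.1.val = a.1.val + d → ((pathGraph m).induce _).Reachable a b := by
    intro d
    induction d with
    | zero => intro a b hab
              have : a = b := by
                apply Subtype.ext; apply Fin.ext; omega
              rw [this]
    | succ n ih =>
        intro a b hab
        have ham : a.1.val + 1 < m := by
          have := b.1.isLt; omega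
        have ha2 := a.2
        have hb2 := b.2
        simp only [Finset.coe_filter, Set.mem_setOf_eq, itv, Finset.mem_filter] at ha2 hb2
        have ha' : (⟨a.1.val + 1, ham⟩ : Fin m) ∈ itv m x y := by
          rw [mem_itv]; simp; omega
        let a' : ((itv m x y : Finset (Fin m)) : Set (Fin m)) :=
          ⟨⟨a.1.val + 1, ham⟩, by exact_mod_cast ha'⟩
        have hadj : ((pathGraph m).induce
            ((itv m x y : Finset (Fin m)) : Set (Fin m))).Adj a a' :=
          pathGraph_adj.mpr (Or.inl rfl)
        exact (hadj.reachable).trans (ih a' b (by simp [a']; omega))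
  rw [connected_iff]
  refine ⟨?_, ?_⟩
  · intro a b
    rcases Nat.le_total a.1.val b.1.val with hab | hab
    · obtain ⟨d, hd⟩ := Nat.le.dest hab
      exact key d a b hd.symm
    · obtain ⟨d, hd⟩ := Nat.le.dest hab
      exact (key d b a hd.symm).symm
  · have hxm : (⟨x, h'⟩ : Fin m) ∈ itv m x y := by rw [mem_itv]; simp; omega
    exact ⟨⟨⟨x, h'⟩, by exact_mod_cast hxm⟩⟩

/-- A connected bundle in the path graph is an interval. -/
lemma bundleConn_interval {B : Finset (Fin m)} (hB : BundleConn (pathGraph m) B)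
    {v w k : Fin m} (hv : v ∈ B) (hw : w ∈ B) (h1 : v.val ≤ k.val) (h2 : k.val ≤ w.val) :
    k ∈ B := by
  by_contra hk
  rcases hB with hB | hB
  · subst hB; exact absurd hv (Finset.notMem_empty v)
  have hreach := hB.preconnected ⟨v, by exact_mod_cast hv⟩ ⟨w, by exact_mod_cast hw⟩
  obtain ⟨p⟩ := hreach
  clear hB
  -- induction on the walk
  suffices H : ∀ (a b : ((B : Finset (Fin m)) : Set (Fin m)))
      (p : ((pathGraph m).induce _).Walk a b),
      a.1.val ≤ k.val → k.val ≤ b.1.val → False from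
    H _ _ p h1 h2
  intro a b p
  induction p with
  | nil =>
      rename_i a₀
      intro hak hka
      have ha₀B : a₀.1 ∈ B := by exact_mod_cast a₀.2
      have : k = a₀.1 := Fin.ext (by omega)
      rw [this] at hk; exact hk ha₀B
  | cons hadj p ih =>
      rename_i a₀ c _
      intro hak hkb
      have ha₀B : a₀.1 ∈ B := by exact_mod_cast a₀.2
      have hne : a₀.1.val ≠ k.val := by
        intro he
        have : k = a₀.1 := Fin.ext he.symm
        rw [this] at hk; exact hk ha₀B
      have hlt : a₀.1.val < k.val := lt_of_le_of_ne hak hne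
      have hadj' : (pathGraph m).Adj a₀.1 c.1 := hadj
      rw [pathGraph_adj] at hadj'
      have hcB : c.1 ∈ B := by exact_mod_cast c.2
      have hck : c.1.val ≠ k.val := by
        intro he
        have : k = c.1 := Fin.ext he.symm
        rw [this] at hk; exact hk hcB
      apply ih _ hkb
      omega

lemma classify_aux {x z : ℕ} (hxz : x < z) (hzm : z ≤ m) {A B : Finset (Fin m)}
    (hU : A ∪ B = itv m x z) (hD : Disjoint A B)
    (hA : BundleConn (pathGraph m) A) (hAne : A.Nonempty)
    (hx0 : (⟨x, lt_of_lt_of_le hxz hzm⟩ : Fin m) ∈ A) :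
    ∃ t, x ≤ t ∧ t ≤ z ∧ A = itv m x t ∧ B = itv m t z := by
  have hAsub : A ⊆ itv m x z := hU ▸ Finset.subset_union_left
  set M := A.max' hAne with hM
  have hMA : M ∈ A := A.max'_mem hAne
  have hMxz : x ≤ M.val ∧ M.val < z := mem_itv.mp (hAsub hMA)
  refine ⟨M.val + 1, by omega, by omega, ?_, ?_⟩
  · ext k
    rw [mem_itv]
    constructor
    · intro hkA
      have h1 := mem_itv.mp (hAsub hkA)
      have h2 : k ≤ M := A.le_max' k hkA
      exact ⟨h1.1, by omega⟩
    · intro ⟨h1, h2⟩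
      exact bundleConn_interval hA hx0 hMA (by simpa) (by omega)
  · have hBeq : B = itv m x z \ A := by
      ext b
      rw [Finset.mem_sdiff, ← hU, Finset.mem_union]
      constructor
      · intro hb
        exact ⟨Or.inr hb, fun hbA => (Finset.disjoint_left.mp hD hbA) hb⟩
      · rintro ⟨hb | hb, hnb⟩
        · exact absurd hb hnb
        · exact hb
    rw [hBeq]
    ext b
    rw [Finset.mem_sdiff, mem_itv, mem_itv]
    constructor
    · rintro ⟨⟨hb1, hb2⟩, hbA⟩
      constructor
      · by_contra hc
        push_neg at hc
        exact hbA (bundleConn_interval hA hx0 hMA (by simpa) (by omega))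
      · exact hb2
    · rintro ⟨hb1, hb2⟩
      refine ⟨⟨by omega, hb2⟩, fun hbA => ?_⟩
      have := A.le_max' b hbA
      omega

lemma classify {x z : ℕ} (hxz : x < z) (hzm : z ≤ m) {p : Finset (Fin m) × Finset (Fin m)}
    (hp : p ∈ Part2 (pathGraph m) (itv m x z)) (h1 : p.1.Nonempty) (h2 : p.2.Nonempty) :
    ∃ t, x ≤ t ∧ t ≤ z ∧ ((p.1 = itv m x t ∧ p.2 = itv m t z) ∨
      (p.2 = itv m x t ∧ p.1 = itv m t z)) := by
  obtain ⟨hU, hD, hc1, hc2⟩ := hp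
  have hx0 : (⟨x, lt_of_lt_of_le hxz hzm⟩ : Fin m) ∈ p.1 ∪ p.2 := by
    rw [hU, mem_itv]; simp; omega
  rw [Finset.mem_union] at hx0
  rcases hx0 with hx0 | hx0
  · obtain ⟨t, ht1, ht2, ht3, ht4⟩ := classify_aux hxz hzm hU hD hc1 h1 hx0
    exact ⟨t, ht1, ht2, Or.inl ⟨ht3, ht4⟩⟩
  · obtain ⟨t, ht1, ht2, ht3, ht4⟩ := classify_aux hxz hzm
      (by rw [Finset.union_comm]; exact hU) hD.symm hc2 h2 hx0
    exact ⟨t, ht1, ht2, Or.inr ⟨ht3, ht4⟩⟩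

lemma mem_part2_itv {x t z : ℕ} (hx : x ≤ t) (hz : t ≤ z) :
    (itv m x t, itv m t z) ∈ Part2 (pathGraph m) (itv m x z) :=
  ⟨itv_union hx hz, itv_disjoint, itv_bundleConn x t, itv_bundleConn t z⟩

end PMMSAux

open GraphFair in
/-- On a path of `m` vertices with an additive utility `u` and `x < y < z ≤ m`,
the partition `([x,y], [y,z])` is a PMMS partition of `[x,z]` for `u` if and only if
(1) `u [x,y] = 0`, or `u [x,a] ≤ u [y,z]` where `a` is the largest `a ≥ x` with
`u [x,a] < u [x,y]`; and (2) `u [y,z] = 0`, or `u [b,z] ≤ u [x,y]` where `b` is the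
smallest `b ≤ z` with `u [b,z] < u [y,z]`. -/
theorem pmms_partition_iff_conditions (m : ℕ)
    (u : Finset (Fin m) → ℝ) (hu : AdditiveUtil u)
    (x y z : ℕ) (hxy : x < y) (hyz : y < z) (hzm : z ≤ m) :
    min (u (itv m x y)) (u (itv m y z)) = pmms (SimpleGraph.pathGraph m) u (itv m x z) ↔
      ((u (itv m x y) = 0 ∨
          ∃ a : ℕ, x ≤ a ∧ a ≤ m ∧ u (itv m x a) < u (itv m x y) ∧
            (∀ a' : ℕ, x ≤ a' → a' ≤ m → u (itv m x a') < u (itv m x y) → a' ≤ a) ∧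
            u (itv m x a) ≤ u (itv m y z)) ∧
        (u (itv m y z) = 0 ∨
          ∃ b : ℕ, b ≤ z ∧ u (itv m b z) < u (itv m y z) ∧
            (∀ b' : ℕ, b' ≤ z → u (itv m b' z) < u (itv m y z) → b ≤ b') ∧
            u (itv m b z) ≤ u (itv m x y))) := by
  classical
  have hxm : x < m := lt_of_lt_of_le (hxy.trans hyz) hzm
  have hxz : x < z := hxy.trans hyz
  set S := ((fun p : Finset (Fin m) × Finset (Fin m) => min (u p.1) (u p.2)) ''
    Part2 (SimpleGraph.pathGraph m) (itv m x z)) with hS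
  have hpm : pmms (SimpleGraph.pathGraph m) u (itv m x z) = sSup S := rfl
  have hbdd : BddAbove S := by
    refine ⟨u Finset.univ, ?_⟩
    rintro r ⟨p, hp, rfl⟩
    exact le_trans (min_le_left _ _) (u_mono hu (Finset.subset_univ _))
  have hmemS : ∀ t : ℕ, x ≤ t → t ≤ z →
      min (u (itv m x t)) (u (itv m t z)) ∈ S :=
    fun t h1 h2 => ⟨(itv m x t, itv m t z), mem_part2_itv h1 h2, rfl⟩
  have hle_pmms : ∀ t : ℕ, x ≤ t → t ≤ z →
      min (u (itv m x t)) (u (itv m t z)) ≤ sSup S :=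
    fun t h1 h2 => le_csSup hbdd (hmemS t h1 h2)
  have htot1 := u_itv_add hu hxy.le hyz.le
  constructor
  · -- forward direction
    intro h
    rw [hpm] at h
    constructor
    · by_cases hF : u (itv m x y) = 0
      · exact Or.inl hF
      right
      have hFpos : 0 < u (itv m x y) := (u_nonneg hu _).lt_of_ne (Ne.symm hF)
      have hPx : u (itv m x x) < u (itv m x y) := by
        rw [itv_empty le_rfl, u_empty hu]; exact hFpos
      set a := Nat.findGreatest (fun a => u (itv m x a) < u (itv m x y)) m with ha
      have hxa : x ≤ a := Nat.le_findGreatest hxm.le hPx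
      have ham : a ≤ m := Nat.findGreatest_le m
      have hPa : u (itv m x a) < u (itv m x y) :=
        Nat.findGreatest_spec (P := fun a => u (itv m x a) < u (itv m x y)) hxm.le hPx
      refine ⟨a, hxa, ham, hPa, fun a' _ h2 h3 => Nat.le_findGreatest h2 h3, ?_⟩
      by_contra hcon
      push_neg at hcon
      have hay : a < y := by
        by_contra hya; push_neg at hya
        exact absurd (u_mono hu (itv_subset_itv le_rfl hya)) (not_le.mpr hPa)
      have haz : a ≤ z := by omega
      have hfeas := hle_pmms a hxa haz
      rw [← h] at hfeas
      have htot2 := u_itv_add hu hxa haz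
      have hga : u (itv m y z) < u (itv m a z) := by linarith
      have hlt : u (itv m y z) < min (u (itv m x a)) (u (itv m a z)) := lt_min hcon hga
      exact lt_irrefl _ (lt_of_lt_of_le hlt (hfeas.trans (min_le_right _ _)))
    · by_cases hG : u (itv m y z) = 0
      · exact Or.inl hG
      right
      have hGpos : 0 < u (itv m y z) := (u_nonneg hu _).lt_of_ne (Ne.symm hG)
      have hex : ∃ b, b ≤ z ∧ u (itv m b z) < u (itv m y z) :=
        ⟨z, le_rfl, by rw [itv_empty le_rfl, u_empty hu]; exact hGpos⟩
      set b := Nat.find hex with hb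
      have hQb := Nat.find_spec hex
      refine ⟨b, hQb.1, hQb.2, fun b' hb1 hb2 => Nat.find_min' hex ⟨hb1, hb2⟩, ?_⟩
      by_contra hcon
      push_neg at hcon
      have hyb : y < b := by
        by_contra hby; push_neg at hby
        exact absurd (u_mono hu (itv_subset_itv hby le_rfl)) (not_le.mpr hQb.2)
      have hxb : x ≤ b := by omega
      have hfeas := hle_pmms b hxb hQb.1
      rw [← h] at hfeas
      have htot2 := u_itv_add hu hxb hQb.1
      have hfb : u (itv m x y) < u (itv m x b) := by linarith [hQb.2]
      have hlt : u (itv m x y) < min (u (itv m x b)) (u (itv m b z)) := lt_min hfb hcon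
      exact lt_irrefl _ (lt_of_lt_of_le hlt (hfeas.trans (min_le_left _ _)))
  · -- backward direction
    rintro ⟨h1, h2⟩
    have key : ∀ t, x ≤ t → t ≤ z →
        min (u (itv m x t)) (u (itv m t z)) ≤ min (u (itv m x y)) (u (itv m y z)) := by
      intro t ht1 ht2
      have htot2 := u_itv_add hu ht1 ht2
      rcases le_total t y with hty | hyt
      · have hft : u (itv m x t) ≤ u (itv m x y) := u_mono hu (itv_subset_itv le_rfl hty)
        rcases h1 with hF0 | ⟨a, hxa, ham, hPa, hmax, hag⟩
        · refine le_trans (min_le_left _ _) (le_trans (hF0 ▸ hft)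
            (le_min hF0.ge (u_nonneg hu _)))
        · rcases lt_or_eq_of_le hft with hlt | heq
          · have hta : t ≤ a := hmax t ht1 (le_trans ht2 hzm) hlt
            have hfa : u (itv m x t) ≤ u (itv m x a) :=
              u_mono hu (itv_subset_itv le_rfl hta)
            exact le_trans (min_le_left _ _) (le_min hft (hfa.trans hag))
          · have hgt : u (itv m t z) = u (itv m y z) := by linarith
            rw [heq, hgt]
      · have hgt : u (itv m t z) ≤ u (itv m y z) := u_mono hu (itv_subset_itv hyt le_rfl)
        rcases h2 with hG0 | ⟨b, hbz, hQb, hmin, hbf⟩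
        · refine le_trans (min_le_right _ _) (le_trans (hG0 ▸ hgt)
            (le_min (u_nonneg hu _) hG0.ge))
        · rcases lt_or_eq_of_le hgt with hlt | heq
          · have hbt : b ≤ t := hmin t ht2 hlt
            have hgb : u (itv m t z) ≤ u (itv m b z) :=
              u_mono hu (itv_subset_itv hbt le_rfl)
            exact le_trans (min_le_right _ _) (le_min (hgb.trans hbf) hgt)
          · have hft : u (itv m x t) = u (itv m x y) := by linarith
            rw [heq, hft]
    have hub : ∀ r ∈ S, r ≤ min (u (itv m x y)) (u (itv m y z)) := by
      rintro r ⟨p, hp, rfl⟩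
      show min (u p.1) (u p.2) ≤ min (u (itv m x y)) (u (itv m y z))
      rcases Finset.eq_empty_or_nonempty p.1 with he | hne1
      · calc min (u p.1) (u p.2) ≤ u p.1 := min_le_left _ _
          _ = 0 := by rw [he, u_empty hu]
          _ ≤ _ := le_min (u_nonneg hu _) (u_nonneg hu _)
      rcases Finset.eq_empty_or_nonempty p.2 with he | hne2
      · calc min (u p.1) (u p.2) ≤ u p.2 := min_le_right _ _
          _ = 0 := by rw [he, u_empty hu]
          _ ≤ _ := le_min (u_nonneg hu _) (u_nonneg hu _)
      obtain ⟨t, ht1, ht2, hc | hc⟩ := classify hxz hzm hp hne1 hne2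
      · rw [hc.1, hc.2]; exact key t ht1 ht2
      · rw [hc.1, hc.2, min_comm]; exact key t ht1 ht2
    rw [hpm]
    exact le_antisymm (le_csSup hbdd (hmemS y hxy.le hyz.le))
      (csSup_le ⟨_, hmemS y hxy.le hyz.le⟩ hub)
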